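/- arXiv:1209.6534 — 2 statements merged into one kernel-verified Lean document; each statement's English description precedes it below -/
import Mathlib

section
/- Let Y = s + σ Pε ∈ ℝⁿ with ε having independent centered unit-variance components, and let π be an orthogonal projection onto a subspace V. Define σ̂² = n‖Y − πY‖ₙ² / Tr(Pᵀ(Iₙ−π)P). Then E[σ̂²] = σ² + n‖s − πs‖ₙ² / Tr(Pᵀ(Iₙ−π)P). -/
open MeasureTheory ProbabilityTheory Matrix

/-! Writing `Q = I − π`, the residual is `Y − πY = Qs + σ QP ε`, an affine function of `ε`.
For a random vector with centered, uncorrelated, unit-variance components,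
`E‖a + Aε‖² = ‖a‖² + Tr(AᵀA)`, and since `Q` is a symmetric idempotent,
`Tr((QP)ᵀ QP) = Tr(Pᵀ Q P)`. -/

section IsotropicVector

variable {Ω ι : Type*} [MeasurableSpace Ω] {μ : Measure Ω} {ε : Ω → ι → ℝ}

lemma integral_mul_eq_one_apply [IsProbabilityMeasure μ] [DecidableEq ι]
    (hindep : iIndepFun (fun i ω => ε ω i) μ) (hL2 : ∀ i, MemLp (fun ω => ε ω i) 2 μ)
    (hmean : ∀ i, ∫ ω, ε ω i ∂μ = 0) (hvar : ∀ i, ∫ ω, ε ω i ^ 2 ∂μ = 1) (j k : ι) :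
    ∫ ω, ε ω j * ε ω k ∂μ = (1 : Matrix ι ι ℝ) j k := by
  rcases eq_or_ne j k with rfl | hjk
  · simpa [sq] using hvar j
  · rw [one_apply_ne hjk, (hindep.indepFun hjk).integral_fun_mul_eq_mul_integral
      (hL2 j).aestronglyMeasurable (hL2 k).aestronglyMeasurable, hmean j, zero_mul]

variable [Fintype ι] (hL2 : ∀ i, MemLp (fun ω => ε ω i) 2 μ)
include hL2

lemma memLp_dotProduct (c : ι → ℝ) : MemLp (fun ω => c ⬝ᵥ ε ω) 2 μ :=
  memLp_finsetSum _ fun j _ => (hL2 j).const_mul (c j)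

lemma integral_dotProduct [IsFiniteMeasure μ] (hmean : ∀ i, ∫ ω, ε ω i ∂μ = 0) (c : ι → ℝ) :
    ∫ ω, c ⬝ᵥ ε ω ∂μ = 0 := by
  simp only [dotProduct]
  rw [integral_finsetSum _ fun j _ => ((hL2 j).integrable one_le_two).const_mul (c j)]
  simp [integral_const_mul, hmean]

lemma integral_dotProduct_mul_dotProduct [DecidableEq ι]
    (hcov : ∀ j k, ∫ ω, ε ω j * ε ω k ∂μ = (1 : Matrix ι ι ℝ) j k) (c d : ι → ℝ) :
    ∫ ω, (c ⬝ᵥ ε ω) * (d ⬝ᵥ ε ω) ∂μ = c ⬝ᵥ d := by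
  have hint : ∀ j k, Integrable (fun ω => c j * d k * (ε ω j * ε ω k)) μ := fun j k =>
    ((hL2 j).integrable_mul (hL2 k)).const_mul _
  have hexpand : ∀ ω, (c ⬝ᵥ ε ω) * (d ⬝ᵥ ε ω) = ∑ j, ∑ k, c j * d k * (ε ω j * ε ω k) := by
    intro ω
    simp only [dotProduct, Finset.sum_mul_sum]
    exact Finset.sum_congr rfl fun j _ => Finset.sum_congr rfl fun k _ => by ring
  simp_rw [hexpand]
  rw [integral_finsetSum _ fun j _ => integrable_finsetSum _ fun k _ => hint j k]
  simp_rw [integral_finsetSum _ fun k _ => hint _ k, integral_const_mul, hcov, one_apply]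
  simp [dotProduct]

lemma integral_sq_add_dotProduct [IsProbabilityMeasure μ] [DecidableEq ι]
    (hmean : ∀ i, ∫ ω, ε ω i ∂μ = 0)
    (hcov : ∀ j k, ∫ ω, ε ω j * ε ω k ∂μ = (1 : Matrix ι ι ℝ) j k) (b : ℝ) (c : ι → ℝ) :
    ∫ ω, (b + c ⬝ᵥ ε ω) ^ 2 ∂μ = b ^ 2 + c ⬝ᵥ c := by
  have hlin : Integrable (fun ω => 2 * b * (c ⬝ᵥ ε ω)) μ :=
    ((memLp_dotProduct hL2 c).integrable one_le_two).const_mul (2 * b)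
  have haff : Integrable (fun ω => b ^ 2 + 2 * b * (c ⬝ᵥ ε ω)) μ := (integrable_const _).add hlin
  have hquad : Integrable (fun ω => (c ⬝ᵥ ε ω) * (c ⬝ᵥ ε ω)) μ :=
    (memLp_dotProduct hL2 c).integrable_mul (memLp_dotProduct hL2 c)
  have hexpand : ∀ ω, (b + c ⬝ᵥ ε ω) ^ 2
      = (b ^ 2 + 2 * b * (c ⬝ᵥ ε ω)) + (c ⬝ᵥ ε ω) * (c ⬝ᵥ ε ω) := fun ω => by ring
  simp_rw [hexpand]
  rw [integral_add haff hquad, integral_add (integrable_const _) hlin,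
    integral_const_mul, integral_dotProduct hL2 hmean,
    integral_dotProduct_mul_dotProduct hL2 hcov]
  simp

lemma integral_sum_sq_add_mulVec {κ : Type*} [Fintype κ] [IsProbabilityMeasure μ]
    [DecidableEq ι] (hmean : ∀ i, ∫ ω, ε ω i ∂μ = 0)
    (hcov : ∀ j k, ∫ ω, ε ω j * ε ω k ∂μ = (1 : Matrix ι ι ℝ) j k)
    (a : κ → ℝ) (A : Matrix κ ι ℝ) :
    ∫ ω, ∑ i, (a i + (A *ᵥ ε ω) i) ^ 2 ∂μ = ∑ i, a i ^ 2 + (Aᵀ * A).trace := by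
  rw [integral_finsetSum (f := fun i ω => (a i + (A *ᵥ ε ω) i) ^ 2) _ fun i _ =>
    ((memLp_const (a i)).add (memLp_dotProduct hL2 (A i))).integrable_sq]
  simp_rw [mulVec, integral_sq_add_dotProduct hL2 hmean hcov, Finset.sum_add_distrib,
    trace_mul_comm Aᵀ]
  rfl

end IsotropicVector

lemma Matrix.IsSymm.transpose_mul_self_mul_of_isIdempotentElem {n m R : Type*} [Fintype n]
    [CommRing R] {Q : Matrix n n R} (hQ : Q.IsSymm) (hQQ : IsIdempotentElem Q)
    (P : Matrix n m R) : (Q * P)ᵀ * (Q * P) = Pᵀ * Q * P := by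
  rw [transpose_mul, hQ.eq, Matrix.mul_assoc, ← Matrix.mul_assoc Q, hQQ.eq, Matrix.mul_assoc]

lemma natCast_mul_inv_mul_sum {K : Type*} [DivisionRing K] [CharZero K] (n : ℕ) (f : Fin n → K) :
    (n : K) * ((n : K)⁻¹ * ∑ i, f i) = ∑ i, f i := by
  rcases n.eq_zero_or_pos with rfl | hn
  · simp
  · exact mul_inv_cancel_left₀ (Nat.cast_ne_zero.mpr hn.ne') _

theorem variance_estimator_mean_general {Ω : Type*} [MeasureSpace Ω]
    [IsProbabilityMeasure (ℙ : Measure Ω)]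
    (n : ℕ) (s : Fin n → ℝ) (σ : ℝ)
    (P π : Matrix (Fin n) (Fin n) ℝ)
    (hπsym : π.IsSymm) (hπidem : π * π = π)
    (htr : 0 < (Pᵀ * (1 - π) * P).trace)
    (ε : Ω → Fin n → ℝ)
    (hindep : iIndepFun (fun i ω => ε ω i) ℙ)
    (hL2 : ∀ i, MemLp (fun ω => ε ω i) 2 ℙ)
    (hmean : ∀ i, (∫ ω, ε ω i) = 0)
    (hvar : ∀ i, (∫ ω, (ε ω i) ^ 2) = 1) :
    (∫ ω, ((n : ℝ) * ((n : ℝ)⁻¹ * ∑ i,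
        ((fun j => s j + σ * P.mulVec (ε ω) j) i
          - π.mulVec (fun j => s j + σ * P.mulVec (ε ω) j) i) ^ 2))
        / (Pᵀ * (1 - π) * P).trace)
      = σ ^ 2 + ((n : ℝ) * ((n : ℝ)⁻¹ * ∑ i, (s i - π.mulVec s i) ^ 2))
          / (Pᵀ * (1 - π) * P).trace := by
  set Q := 1 - π
  have hQsym : Q.IsSymm := isSymm_one.sub hπsym
  have hQidem : IsIdempotentElem Q := IsIdempotentElem.one_sub hπidem
  have hcompl : ∀ v, v - π *ᵥ v = Q *ᵥ v := fun v => by simp [Q, sub_mulVec]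
  have hresidual : ∀ ω i, (fun j => s j + σ * (P *ᵥ ε ω) j) i
      - (π *ᵥ fun j => s j + σ * (P *ᵥ ε ω) j) i = (Q *ᵥ s) i + ((σ • (Q * P)) *ᵥ ε ω) i := by
    intro ω i
    change (s + σ • (P *ᵥ ε ω)) i - (π *ᵥ (s + σ • (P *ᵥ ε ω))) i = _
    rw [← Pi.sub_apply, hcompl, mulVec_add, mulVec_smul, mulVec_mulVec, smul_mulVec]
    rfl
  have hs : ∀ i, s i - (π *ᵥ s) i = (Q *ᵥ s) i := fun i => congrFun (hcompl s) i
  simp_rw [natCast_mul_inv_mul_sum, hresidual, hs, integral_div,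
    integral_sum_sq_add_mulVec hL2 hmean (integral_mul_eq_one_apply hindep hL2 hmean hvar),
    transpose_smul, smul_mul_smul, trace_smul,
    hQsym.transpose_mul_self_mul_of_isIdempotentElem hQidem]
  rw [smul_eq_mul, add_div, mul_div_cancel_right₀ _ htr.ne', add_comm, sq]

/-- Lemma 3 (`G_UV_lem_bias`): the residual least-squares variance estimator
`σ̂² = n‖Y − πY‖ₙ² / Tr(Pᵀ(I−π)P)` with `Y = s + σPε` satisfies
`E[σ̂²] = σ² + n‖s − πs‖ₙ² / Tr(Pᵀ(I−π)P)`. -/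
theorem variance_estimator_mean {Ω : Type*} [MeasureSpace Ω]
    [IsProbabilityMeasure (ℙ : Measure Ω)]
    (n : ℕ) (hn : 0 < n) (s : Fin n → ℝ) (σ : ℝ)
    (P π : Matrix (Fin n) (Fin n) ℝ)
    (hπsym : π.IsSymm) (hπidem : π * π = π)
    (htr : 0 < (Pᵀ * (1 - π) * P).trace)
    (ε : Ω → Fin n → ℝ)
    (hmeas : ∀ i, Measurable fun ω => ε ω i)
    (hindep : iIndepFun (fun i ω => ε ω i) ℙ)
    (hL2 : ∀ i, MemLp (fun ω => ε ω i) 2 ℙ)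
    (hmean : ∀ i, (∫ ω, ε ω i) = 0)
    (hvar : ∀ i, (∫ ω, (ε ω i) ^ 2) = 1) :
    (∫ ω, ((n : ℝ) * ((n : ℝ)⁻¹ * ∑ i,
        ((fun j => s j + σ * P.mulVec (ε ω) j) i
          - π.mulVec (fun j => s j + σ * P.mulVec (ε ω) j) i) ^ 2))
        / (Pᵀ * (1 - π) * P).trace)
      = σ ^ 2 + ((n : ℝ) * ((n : ℝ)⁻¹ * ∑ i, (s i - π.mulVec s i) ^ 2))
          / (Pᵀ * (1 - π) * P).trace :=
  variance_estimator_mean_general n s σ P π hπsym hπidem htr ε hindep hL2 hmean hvar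
end

section
/- Let P be an n×n matrix and ε a standard Gaussian vector in ℝⁿ. Then E[‖Pε‖ₙ⁴]^{1/2} ≤ (Tr(PᵀP) + ρ²(P))/n. -/
open MeasureTheory ProbabilityTheory Matrix

/-- The spectral norm of a real `n×n` matrix. -/
noncomputable def specNorm {n : ℕ} (A : Matrix (Fin n) (Fin n) ℝ) : ℝ :=
  ‖Matrix.toEuclideanCLM (𝕜 := ℝ) A‖

/-!
By independence, the law of `ε` is the product of standard Gaussians, under which Isserlis'
formula `E[x_a x_b x_c x_d] = δ_ab δ_cd + δ_ac δ_bd + δ_ad δ_bc` gives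
`E[(xᵀ A x)²] = (tr A)² + tr (Aᵀ A) + tr (A²)`. For `A = Pᵀ P` the last two terms both equal
`tr (A²) = ‖P Pᵀ‖²_F ≤ ρ²(P) ‖Pᵀ‖²_F = ρ²(P) tr A`, and `t² + 2 ρ² t ≤ (t + ρ²)²`.
The Gaussian moments `1, 0, 1, 0, 3` are read off the derivatives of the moment generating
function `e^{t²/2}`.
-/

open Real Polynomial Finset

noncomputable def gaussMomentPoly : ℕ → ℝ[X]
  | 0 => 1
  | k + 1 => derivative (gaussMomentPoly k) + X * gaussMomentPoly k

lemma iteratedDeriv_exp_sq_div_two (k : ℕ) :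
    iteratedDeriv k (fun t => exp (t ^ 2 / 2))
      = fun t => (gaussMomentPoly k).eval t * exp (t ^ 2 / 2) := by
  induction k with
  | zero => simp [gaussMomentPoly]
  | succ k ih =>
    ext t
    have hexp : HasDerivAt (fun t => exp (t ^ 2 / 2)) (t * exp (t ^ 2 / 2)) t := by
      convert ((hasDerivAt_pow 2 t).div_const 2).exp using 1
      ring
    rw [iteratedDeriv_succ, ih, ((gaussMomentPoly k).hasDerivAt t |>.fun_mul hexp).deriv]
    simp only [gaussMomentPoly, eval_add, eval_mul, eval_X]
    ring

lemma integral_pow_gaussianReal (k : ℕ) :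
    ∫ x, x ^ k ∂gaussianReal 0 1 = (gaussMomentPoly k).eval 0 := by
  have h := iteratedDeriv_mgf_zero (X := fun x => x) (μ := gaussianReal 0 1) (by simp) k
  rw [mgf_fun_id_gaussianReal] at h
  simp only [zero_mul, zero_add, NNReal.coe_one, one_mul, iteratedDeriv_exp_sq_div_two] at h
  simpa using h.symm

noncomputable abbrev stdGaussianPi (ι : Type*) [Fintype ι] : Measure (ι → ℝ) :=
  Measure.pi fun _ => gaussianReal 0 1

section StdGaussianPi

variable {ι : Type*} [Fintype ι]

lemma integrable_prod_pow_stdGaussianPi (m : ι → ℕ) :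
    Integrable (fun x => ∏ i, x i ^ m i) (stdGaussianPi ι) :=
  .fintype_prod fun i => integrable_pow_of_mem_interior_integrableExpSet (X := id) (by simp) (m i)

lemma integral_prod_pow_stdGaussianPi (m : ι → ℕ) :
    ∫ x, ∏ i, x i ^ m i ∂stdGaussianPi ι = ∏ i, (gaussMomentPoly (m i)).eval 0 := by
  simp only [integral_fintype_prod_eq_prod (fun i (t : ℝ) => t ^ m i), integral_pow_gaussianReal]

lemma dotProduct_mulVec_sq (A : Matrix ι ι ℝ) (x : ι → ℝ) :
    (x ⬝ᵥ A *ᵥ x) ^ 2 = ∑ a, ∑ b, ∑ c, ∑ d, A a b * A c d * (x a * x b * x c * x d) := by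
  simp only [dotProduct, mulVec, sq, sum_mul, mul_sum]
  exact sum_congr rfl fun a _ => sum_congr rfl fun b _ => sum_congr rfl fun c _ =>
    sum_congr rfl fun d _ => by ring

variable [DecidableEq ι]

lemma mul_mul_mul_eq_prod_pow_count {R : Type*} [CommMonoid R] (x : ι → R) (a b c d : ι) :
    x a * x b * x c * x d = ∏ i, x i ^ Multiset.count i {a, b, c, d} := by
  have h := prod_multiset_map_count ({a, b, c, d} : Multiset ι) x
  rw [prod_subset (subset_univ _) fun i _ hi => by
    rw [Multiset.count_eq_zero.2 (by simpa using hi), pow_zero]] at h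
  simpa [mul_assoc] using h

lemma prod_eval_gaussMomentPoly_count (a b c d : ι) :
    ∏ i, (gaussMomentPoly (Multiset.count i {a, b, c, d})).eval 0
      = (if a = b then 1 else 0) * (if c = d then 1 else 0)
        + (if a = c then 1 else 0) * (if b = d then 1 else 0)
        + (if a = d then 1 else 0) * (if b = c then 1 else 0) := by
  rw [← prod_subset (subset_univ {a, b, c, d}) fun i _ hi => by
    simp only [mem_insert, mem_singleton, not_or] at hi; simp [hi, gaussMomentPoly]]
  by_cases hab : a = b <;> by_cases hac : a = c <;> by_cases had : a = d <;>
    by_cases hbc : b = c <;> by_cases hbd : b = d <;> by_cases hcd : c = d <;>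
    simp_all [prod_insert, Ne.symm, gaussMomentPoly, derivative_mul]

lemma integrable_mul_mul_mul_stdGaussianPi (a b c d : ι) :
    Integrable (fun x => x a * x b * x c * x d) (stdGaussianPi ι) := by
  simpa only [mul_mul_mul_eq_prod_pow_count] using integrable_prod_pow_stdGaussianPi _

lemma integral_mul_mul_mul_stdGaussianPi (a b c d : ι) :
    ∫ x, x a * x b * x c * x d ∂stdGaussianPi ι
      = (if a = b then 1 else 0) * (if c = d then 1 else 0)
        + (if a = c then 1 else 0) * (if b = d then 1 else 0)
        + (if a = d then 1 else 0) * (if b = c then 1 else 0) := by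
  simp only [mul_mul_mul_eq_prod_pow_count, integral_prod_pow_stdGaussianPi,
    prod_eval_gaussMomentPoly_count]

theorem integral_dotProduct_mulVec_sq_stdGaussianPi (A : Matrix ι ι ℝ) :
    ∫ x, (x ⬝ᵥ A *ᵥ x) ^ 2 ∂stdGaussianPi ι = A.trace ^ 2 + (Aᵀ * A).trace + (A * A).trace := by
  have hint := integrable_mul_mul_mul_stdGaussianPi (ι := ι)
  simp_rw [dotProduct_mulVec_sq]
  simp (disch := intros; fun_prop) only [integral_finsetSum, integral_const_mul,
    integral_mul_mul_mul_stdGaussianPi]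
  simp only [mul_ite, mul_one, mul_zero, mul_add, sum_add_distrib, sum_ite_eq, mem_univ,
    ↓reduceIte, sum_ite_irrel, sum_const_zero, trace, diag_apply, sq, sum_mul_sum, mul_apply,
    transpose_apply, add_left_inj, add_right_inj]
  exact sum_comm

end StdGaussianPi

lemma dotProduct_mulVec_self_le {n : ℕ} (A : Matrix (Fin n) (Fin n) ℝ) (v : Fin n → ℝ) :
    A *ᵥ v ⬝ᵥ A *ᵥ v ≤ specNorm A ^ 2 * (v ⬝ᵥ v) := by
  have hnorm : ∀ w : Fin n → ℝ, ‖WithLp.toLp 2 w‖ ^ 2 = w ⬝ᵥ w := fun w => by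
    rw [EuclideanSpace.norm_sq_eq]; simp [dotProduct, sq]
  rw [← hnorm, ← hnorm, ← toEuclideanCLM_toLp, ← mul_pow]
  gcongr
  exact (toEuclideanCLM (𝕜 := ℝ) A).le_opNorm _

lemma trace_transpose_mul_self_mul_le {n : ℕ} (A B : Matrix (Fin n) (Fin n) ℝ) :
    ((A * B)ᵀ * (A * B)).trace ≤ specNorm A ^ 2 * (Bᵀ * B).trace := by
  have htrace : ∀ M : Matrix (Fin n) (Fin n) ℝ, (Mᵀ * M).trace = ∑ j, Mᵀ j ⬝ᵥ Mᵀ j := fun M => by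
    simp [trace, mul_apply, dotProduct]
  have hcol : ∀ j, (A * B)ᵀ j = A *ᵥ Bᵀ j := fun j => by
    ext i; simp [mul_apply, mulVec, dotProduct]
  simp only [htrace, hcol, mul_sum]
  exact sum_le_sum fun j _ => dotProduct_mulVec_self_le A _

lemma trace_transpose_mul_self_sq_le {n : ℕ} (P : Matrix (Fin n) (Fin n) ℝ) :
    (Pᵀ * P * (Pᵀ * P)).trace ≤ specNorm P ^ 2 * (Pᵀ * P).trace := by
  have hcyc : (P * Pᵀ * (P * Pᵀ)).trace = (Pᵀ * P * (Pᵀ * P)).trace := by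
    rw [Matrix.mul_assoc, trace_mul_comm]
    simp only [Matrix.mul_assoc]
  have h := trace_transpose_mul_self_mul_le P Pᵀ
  rwa [transpose_mul, transpose_transpose, hcyc, trace_mul_comm P] at h

lemma sqrt_sq_add_two_mul_le {t r s : ℝ} (ht : 0 ≤ t) (hr : 0 ≤ r) (hs : s ≤ r * t) :
    √(t ^ 2 + 2 * s) ≤ t + r :=
  Real.sqrt_le_iff.2 ⟨by positivity, by nlinarith⟩

theorem fourth_moment_bound_general {Ω : Type*} [MeasureSpace Ω]
    (n : ℕ) (P : Matrix (Fin n) (Fin n) ℝ)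
    (ε : Ω → Fin n → ℝ)
    (hmeas : ∀ i, Measurable fun ω => ε ω i)
    (hindep : iIndepFun (fun i ω => ε ω i) ℙ)
    (hgauss : ∀ i, Measure.map (fun ω => ε ω i) ℙ = gaussianReal 0 1) :
    Real.sqrt (∫ ω, ((n : ℝ)⁻¹ * ∑ i, (P.mulVec (ε ω) i) ^ 2) ^ 2)
      ≤ ((Pᵀ * P).trace + specNorm P ^ 2) / n := by
  have hlaw : (ℙ : Measure Ω).map ε = stdGaussianPi (Fin n) := by
    simpa only [hgauss] using hindep.map_fun_eq_pi_map fun i => (hmeas i).aemeasurable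
  have hquad : ∀ x, ∑ i, (P *ᵥ x) i ^ 2 = x ⬝ᵥ (Pᵀ * P) *ᵥ x := fun x => by
    rw [← mulVec_mulVec, dotProduct_mulVec, vecMul_transpose]
    simp only [dotProduct, sq]
  have hmoment : ∫ ω, ((n : ℝ)⁻¹ * ∑ i, (P *ᵥ ε ω) i ^ 2) ^ 2
      = (n : ℝ)⁻¹ ^ 2 * ((Pᵀ * P).trace ^ 2 + 2 * (Pᵀ * P * (Pᵀ * P)).trace) := by
    simp_rw [hquad, mul_pow]
    rw [integral_const_mul, ← integral_map (f := fun x => (x ⬝ᵥ (Pᵀ * P) *ᵥ x) ^ 2)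
      (measurable_pi_lambda _ hmeas).aemeasurable (by fun_prop), hlaw,
      integral_dotProduct_mulVec_sq_stdGaussianPi, transpose_mul, transpose_transpose]
    ring
  rw [hmoment, Real.sqrt_mul (by positivity), Real.sqrt_sq (by positivity), div_eq_inv_mul]
  gcongr
  exact sqrt_sq_add_two_mul_le (posSemidef_conjTranspose_mul_self P).trace_nonneg (sq_nonneg _)
    (trace_transpose_mul_self_sq_le P)

/-- For a standard Gaussian vector `ε`, `E[‖Pε‖ₙ⁴]^{1/2} ≤ (Tr(PᵀP) + ρ²(P))/n`. -/
theorem fourth_moment_bound {Ω : Type*} [MeasureSpace Ω]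
    [IsProbabilityMeasure (ℙ : Measure Ω)]
    (n : ℕ) (hn : 0 < n) (P : Matrix (Fin n) (Fin n) ℝ)
    (ε : Ω → Fin n → ℝ)
    (hmeas : ∀ i, Measurable fun ω => ε ω i)
    (hindep : iIndepFun (fun i ω => ε ω i) ℙ)
    (hgauss : ∀ i, Measure.map (fun ω => ε ω i) ℙ = gaussianReal 0 1) :
    Real.sqrt (∫ ω, ((n : ℝ)⁻¹ * ∑ i, (P.mulVec (ε ω) i) ^ 2) ^ 2)
      ≤ ((Pᵀ * P).trace + specNorm P ^ 2) / n :=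
  fourth_moment_bound_general n P ε hmeas hindep hgauss
end
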